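/- arXiv:1410.3745 — 2 statements merged into one kernel-verified Lean document; each statement's English description precedes it below -/
import Mathlib

section
/- For all 0 ≤ x ≤ 1, x - (x² + x³)/2 ≤ h(1-x) ≤ x - x²/2, where h(t) = -t·log t with h(0)=0. -/
noncomputable def h (t : ℝ) : ℝ := -t * Real.log t

/-! The upper bound is `y ≥ sinh y` for `y = log t ≤ 0`, since `sinh (log t) = (t - t⁻¹) / 2`.
The lower bound keeps the first two terms of `-log (1 - x) = ∑ xⁿ / n`, whose terms are
nonnegative for `x ≥ 0`; multiplying `x + x² / 2` by `1 - x` gives exactly `x - (x² + x³) / 2`. -/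

open Real

lemma sub_inv_div_two_le_log {t : ℝ} (ht0 : 0 < t) (ht1 : t ≤ 1) : (t - t⁻¹) / 2 ≤ log t :=
  sinh_log ht0 ▸ sinh_le_self_iff.2 (log_nonpos ht0.le ht1)

lemma neg_mul_log_le_one_sub_sq_div_two {t : ℝ} (ht0 : 0 ≤ t) (ht1 : t ≤ 1) :
    -t * log t ≤ (1 - t ^ 2) / 2 := by
  rcases ht0.eq_or_lt with rfl | ht0
  · norm_num
  have hlog := mul_le_mul_of_nonneg_left (sub_inv_div_two_le_log ht0 ht1) ht0.le
  have hrw : t * ((t - t⁻¹) / 2) = -((1 - t ^ 2) / 2) := by field_simp; ring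
  linarith

lemma add_sq_div_two_le_neg_log_one_sub {x : ℝ} (hx0 : 0 ≤ x) (hx1 : x < 1) :
    x + x ^ 2 / 2 ≤ -log (1 - x) := by
  have hsum := hasSum_pow_div_log_of_abs_lt_one (abs_lt.2 ⟨by linarith, hx1⟩)
  have hle := sum_le_hasSum (Finset.range 2) (fun n _ => by positivity) hsum
  norm_num [Finset.sum_range_succ] at hle
  exact hle

theorem h_one_sub_bounds (x : ℝ) (hx0 : 0 ≤ x) (hx1 : x ≤ 1) :
    x - (x ^ 2 + x ^ 3) / 2 ≤ h (1 - x) ∧ h (1 - x) ≤ x - x ^ 2 / 2 := by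
  refine ⟨?_, ?_⟩
  · rcases hx1.eq_or_lt with rfl | hx1
    · norm_num [h]
    have hlog := mul_le_mul_of_nonneg_left (add_sq_div_two_le_neg_log_one_sub hx0 hx1)
      (sub_nonneg.2 hx1.le)
    calc x - (x ^ 2 + x ^ 3) / 2 = (1 - x) * (x + x ^ 2 / 2) := by ring
      _ ≤ (1 - x) * -log (1 - x) := hlog
      _ = h (1 - x) := by rw [h]; ring
  · calc h (1 - x) ≤ (1 - (1 - x) ^ 2) / 2 :=
        neg_mul_log_le_one_sub_sq_div_two (sub_nonneg.2 hx1) (by linarith)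
      _ = x - x ^ 2 / 2 := by ring
end

section
/- With h(t) = -t·log t, α ∈ (0,1/2), ρ ≥ 0, ρα ≤ 1, 2α - ρα² ≤ 1: for every d ≥ 1, (d/2)[h(ρα²) + 2h(α-ρα²) + h(1-2α+ρα²)] - (d-1)[h(α)+h(1-α)] ≤ -(d/2)·Ψ(ρ)·α² + α + h(α) + ((2ρ+1)d/2)·α³, where Ψ(ρ) = 1 - ρ + ρ·log ρ. -/
noncomputable def Psi (x : ℝ) : ℝ := 1 - x + x * Real.log x

open Real

lemma h_mul (a b : ℝ) : h (a * b) = b * h a + a * h b := by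
  rcases eq_or_ne a 0 with rfl | ha
  · simp [h]
  rcases eq_or_ne b 0 with rfl | hb
  · simp [h]
  simp only [h, log_mul ha hb]
  ring

lemma Psi_eq_one_sub_sub_h (x : ℝ) : Psi x = 1 - x - h x := by
  simp only [Psi, h]
  ring

lemma h_le_one_sub_sq_div_two {t : ℝ} (ht0 : 0 ≤ t) (ht1 : t ≤ 1) : h t ≤ (1 - t ^ 2) / 2 := by
  rcases ht0.eq_or_lt with rfl | ht0
  · norm_num [h]
  set s := -log t
  have hs : 0 ≤ s := neg_nonneg.mpr (log_nonpos ht0.le ht1)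
  have hexp : exp s = t⁻¹ := by rw [exp_neg, exp_log ht0]
  have hexp_neg : exp (-s) = t := by rw [neg_neg, exp_log ht0]
  calc h t = t * s := by simp only [h, s]; ring
    _ ≤ t * sinh s := mul_le_mul_of_nonneg_left (self_le_sinh_iff.mpr hs) ht0.le
    _ = (1 - t ^ 2) / 2 := by rw [sinh_eq, hexp, hexp_neg]; field_simp

lemma h_one_sub_le {x : ℝ} (hx0 : 0 ≤ x) (hx1 : x ≤ 1) : h (1 - x) ≤ x - x ^ 2 / 2 := by
  have := h_le_one_sub_sq_div_two (sub_nonneg.mpr hx1) (sub_le_self 1 hx0)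
  linarith

lemma add_sq_div_two_add_cube_div_three_le_neg_log_one_sub {x : ℝ} (hx0 : 0 ≤ x) (hx1 : x < 1) :
    x + x ^ 2 / 2 + x ^ 3 / 3 ≤ -log (1 - x) := by
  have hseries := hasSum_pow_div_log_of_abs_lt_one (abs_lt.mpr ⟨by linarith, hx1⟩)
  have := sum_le_hasSum (Finset.range 3) (fun n _ ↦ by positivity) hseries
  norm_num [Finset.sum_range_succ] at this
  linarith

lemma le_h_one_sub {x : ℝ} (hx0 : 0 ≤ x) (hx1 : x ≤ 1) : x - x ^ 2 / 2 - x ^ 3 / 2 ≤ h (1 - x) := by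
  rcases hx1.eq_or_lt with rfl | hx1
  · norm_num [h]
  have hlog := add_sq_div_two_add_cube_div_three_le_neg_log_one_sub hx0 hx1
  have hmul := mul_le_mul_of_nonneg_left hlog (sub_nonneg.mpr hx1.le)
  have : h (1 - x) = (1 - x) * -log (1 - x) := by simp only [h]; ring
  nlinarith [pow_nonneg hx0 3]

lemma pair_entropy_le {α ρ : ℝ} (hα : 0 ≤ α) (hρ : 0 ≤ ρ) (hρα : ρ * α ≤ 1)
    (hsum : 2 * α - ρ * α ^ 2 ≤ 1) :
    h (ρ * α ^ 2) + 2 * h (α - ρ * α ^ 2) + h (1 - 2 * α + ρ * α ^ 2)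
      ≤ 2 * (h α + h (1 - α)) - Psi ρ * α ^ 2 + (2 * ρ + 1) * α ^ 3 := by
  have hsplit : h (ρ * α ^ 2) + 2 * h (α - ρ * α ^ 2) + h (1 - 2 * α + ρ * α ^ 2)
      = α ^ 2 * h ρ + 2 * h α + 2 * α * h (1 - ρ * α) + h (1 - (2 * α - ρ * α ^ 2)) := by
    rw [show α - ρ * α ^ 2 = α * (1 - ρ * α) by ring, h_mul α, h_mul ρ, sq, h_mul α α]
    ring_nf
  have hρα0 : 0 ≤ ρ * α := mul_nonneg hρ hα
  have hα1 : α ≤ 1 := by nlinarith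
  have hρα_bound := mul_le_mul_of_nonneg_left (h_one_sub_le hρα0 hρα) (by positivity : 0 ≤ 2 * α)
  have hβ_bound := h_one_sub_le (by nlinarith) hsum
  have hα_bound := le_h_one_sub hα hα1
  rw [hsplit, Psi_eq_one_sub_sub_h]
  nlinarith [mul_nonneg (mul_nonneg hρα0 hρα0) hα, mul_nonneg (mul_nonneg hρα0 hρα0) (sq_nonneg α)]

theorem entropy_functional_upper_bound_general (α ρ : ℝ)
    (hα0 : 0 < α) (hρ : 0 ≤ ρ)
    (hρα : ρ * α ≤ 1) (hsum : 2 * α - ρ * α ^ 2 ≤ 1)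
    (d : ℕ) :
    (d : ℝ) / 2 * (h (ρ * α ^ 2) + 2 * h (α - ρ * α ^ 2) + h (1 - 2 * α + ρ * α ^ 2))
        - ((d : ℝ) - 1) * (h α + h (1 - α))
      ≤ -((d : ℝ) / 2) * Psi ρ * α ^ 2 + α + h α + (2 * ρ + 1) * (d : ℝ) / 2 * α ^ 3 := by
  have hpair := mul_le_mul_of_nonneg_left (pair_entropy_le hα0.le hρ hρα hsum)
    (by positivity : (0 : ℝ) ≤ d / 2)
  have hα1 : α ≤ 1 := by nlinarith
  have hα_bound : h (1 - α) ≤ α := by nlinarith [h_one_sub_le hα0.le hα1]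
  linarith

theorem entropy_functional_upper_bound (α ρ : ℝ)
    (hα0 : 0 < α) (hα : α < 1 / 2) (hρ : 0 ≤ ρ)
    (hρα : ρ * α ≤ 1) (hsum : 2 * α - ρ * α ^ 2 ≤ 1)
    (d : ℕ) (hd : 1 ≤ d) :
    (d : ℝ) / 2 * (h (ρ * α ^ 2) + 2 * h (α - ρ * α ^ 2) + h (1 - 2 * α + ρ * α ^ 2))
        - ((d : ℝ) - 1) * (h α + h (1 - α))
      ≤ -((d : ℝ) / 2) * Psi ρ * α ^ 2 + α + h α + (2 * ρ + 1) * (d : ℝ) / 2 * α ^ 3 :=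
  entropy_functional_upper_bound_general α ρ hα0 hρ hρα hsum d
end
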